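/- In the Gripper domain, the learned abstract action set over features X (robot in target room), B (number of balls not in the target room), C (number of balls carried), and G (number of free grippers) is sound: in any reachable state of any two-room Gripper instance, (i) if C>0 and X, dropping a carried ball in the target room is applicable, decreases C by 1, increases G by 1, and leaves B unchanged; (ii) if ¬X, B>0 and G>0, picking a ball in the non-target room is applicable, decreases B and G by 1 and increases C by 1; (iii) if ¬X and C>0, moving to the target room is applicable and makes X true without changing B, C, G; (iv) if X, C=0 and G>0, leaving the target room is applicable and makes X false without changing B, C, G. -/

import Mathlib

/-- A Gripper state: the room of the robot (`true` = target room x) and the location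
of each ball (a room, or a gripper carrying it). -/
structure GState (Ball Grip : Type) where
  robot : Bool
  loc : Ball → Bool ⊕ Grip

/-- Consistency: each gripper carries at most one ball. -/
def WF {Ball Grip : Type} (s : GState Ball Grip) : Prop :=
  ∀ b b' g, s.loc b = Sum.inr g → s.loc b' = Sum.inr g → b = b'

/-- X: the robot is in the target room. -/
def Xf {Ball Grip : Type} (s : GState Ball Grip) : Prop := s.robot = true

/-- B: number of balls in the non-target room. -/
def Bf {Ball Grip : Type} [Fintype Ball] [DecidableEq Ball] [DecidableEq Grip]
    (s : GState Ball Grip) : ℕ :=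
  (Finset.univ.filter fun b : Ball => s.loc b = Sum.inl false).card

/-- C: number of balls being carried. -/
def Cf {Ball Grip : Type} [Fintype Ball] [Fintype Grip] [DecidableEq Ball]
    [DecidableEq Grip] (s : GState Ball Grip) : ℕ :=
  (Finset.univ.filter fun b : Ball => ∃ g, s.loc b = Sum.inr g).card

/-- G: number of free grippers. -/
def Gf {Ball Grip : Type} [Fintype Ball] [Fintype Grip] [DecidableEq Ball]
    [DecidableEq Grip] (s : GState Ball Grip) : ℕ :=
  (Finset.univ.filter fun g : Grip => ∀ b, s.loc b ≠ Sum.inr g).card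

inductive GAct (Ball Grip : Type)
  | move (r : Bool)
  | pick (b : Ball) (g : Grip)
  | drop (b : Ball) (g : Grip)

def gApp {Ball Grip : Type} (s : GState Ball Grip) : GAct Ball Grip → Prop
  | .move r => r ≠ s.robot
  | .pick b g => s.loc b = Sum.inl s.robot ∧ ∀ b', s.loc b' ≠ Sum.inr g
  | .drop b g => s.loc b = Sum.inr g

def gSucc {Ball Grip : Type} [DecidableEq Ball] (s : GState Ball Grip) :
    GAct Ball Grip → GState Ball Grip
  | .move r => { s with robot := r }
  | .pick b g => { s with loc := Function.update s.loc b (Sum.inr g) }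
  | .drop b _ => { s with loc := Function.update s.loc b (Sum.inl s.robot) }

/-!
Each action changes the robot's room or the location of a single ball, so the changes of B and C
are read off that one ball. For G, consistency makes carried balls correspond one-to-one to
occupied grippers, so G + C is the number of grippers and G moves opposite to C.
-/

open Finset Function

theorem card_filter_update_add {α β : Type*} [Fintype α] [DecidableEq α] (p : β → Prop)
    [DecidablePred p] (f : α → β) (a : α) (v : β) :
    #{x | p (update f a v x)} + (if p (f a) then 1 else 0) =
      #{x | p (f x)} + (if p v then 1 else 0) := by
  have hoff : ∑ x ∈ univ.erase a, (if p (update f a v x) then 1 else 0) =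
      ∑ x ∈ univ.erase a, (if p (f x) then 1 else 0) :=
    sum_congr rfl fun x hx => by rw [update_of_ne (ne_of_mem_erase hx)]
  rw [card_filter, card_filter, ← add_sum_erase _ _ (mem_univ a),
    ← add_sum_erase _ _ (mem_univ a), hoff, update_self]
  omega

section Gripper

variable {Ball Grip : Type} [DecidableEq Ball] {s : GState Ball Grip} {b : Ball} {g : Grip}

theorem WF.gSucc (hwf : WF s) {a : GAct Ball Grip} (ha : gApp s a) : WF (gSucc s a) := by
  cases a with
  | move r => exact hwf
  | pick b g =>
    intro b₁ b₂ g' (h₁ : update s.loc b (.inr g) b₁ = _)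
      (h₂ : update s.loc b (.inr g) b₂ = _)
    rw [update_apply] at h₁ h₂
    split_ifs at h₁ h₂ with hb₁ hb₂ hb₂
    · exact hb₁.trans hb₂.symm
    · exact absurd (Sum.inr_injective h₁ ▸ h₂) (ha.2 b₂)
    · exact absurd (Sum.inr_injective h₂ ▸ h₁) (ha.2 b₁)
    · exact hwf _ _ _ h₁ h₂
  | drop b g =>
    intro b₁ b₂ g' (h₁ : update s.loc b (.inl s.robot) b₁ = _)
      (h₂ : update s.loc b (.inl s.robot) b₂ = _)
    rw [update_apply] at h₁ h₂
    split_ifs at h₁ h₂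
    exact hwf _ _ _ h₁ h₂

variable [Fintype Ball] [DecidableEq Grip]

theorem Bf_update_add (r : Bool) (v : Bool ⊕ Grip) :
    Bf ⟨r, update s.loc b v⟩ + (if s.loc b = .inl false then 1 else 0) =
      Bf s + (if v = .inl false then 1 else 0) :=
  card_filter_update_add (fun l : Bool ⊕ Grip => l = .inl false) s.loc b v

theorem Bf_drop (hX : Xf s) (h : s.loc b = .inr g) : Bf (gSucc s (.drop b g)) = Bf s := by
  simpa [gSucc, h, show s.robot = true from hX] using
    Bf_update_add (s := s) (b := b) s.robot (.inl s.robot)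

theorem Bf_pick (h : s.loc b = .inl false) : Bf (gSucc s (.pick b g)) + 1 = Bf s := by
  simpa [gSucc, h] using Bf_update_add (s := s) (b := b) s.robot (.inr g)

variable [Fintype Grip]

theorem Cf_update_add (r : Bool) (v : Bool ⊕ Grip) :
    Cf ⟨r, update s.loc b v⟩ + (if ∃ g, s.loc b = .inr g then 1 else 0) =
      Cf s + (if ∃ g, v = .inr g then 1 else 0) :=
  card_filter_update_add (fun l : Bool ⊕ Grip => ∃ g, l = .inr g) s.loc b v

theorem Cf_drop (h : s.loc b = .inr g) : Cf (gSucc s (.drop b g)) + 1 = Cf s := by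
  simpa [gSucc, h] using Cf_update_add (s := s) (b := b) s.robot (.inl s.robot)

theorem Cf_pick {r : Bool} (h : s.loc b = .inl r) : Cf (gSucc s (.pick b g)) = Cf s + 1 := by
  simpa [gSucc, h] using Cf_update_add (s := s) (b := b) s.robot (.inr g)

theorem Gf_add_Cf (hwf : WF s) : Gf s + Cf s = Fintype.card Grip := by
  rw [← card_univ,
    ← card_filter_add_card_filter_not (s := univ) fun g => ∀ b, s.loc b ≠ .inr g]
  congr 1
  unfold Cf
  refine card_bij (fun b hb => (mem_filter.1 hb).2.choose) (fun b hb => ?_)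
    (fun b₁ hb₁ b₂ hb₂ h => ?_) (fun g hg => ?_)
  · simpa using ⟨b, (mem_filter.1 hb).2.choose_spec⟩
  · exact hwf _ _ _ (mem_filter.1 hb₁).2.choose_spec (h ▸ (mem_filter.1 hb₂).2.choose_spec)
  · obtain ⟨b, hb⟩ : ∃ b, s.loc b = .inr g := by simpa using hg
    have hmem : b ∈ ({b | ∃ g, s.loc b = .inr g} : Finset Ball) := by simp [hb]
    exact ⟨b, hmem, Sum.inr_injective ((mem_filter.1 hmem).2.choose_spec.symm.trans hb)⟩

theorem Gf_drop (hwf : WF s) (h : s.loc b = .inr g) : Gf (gSucc s (.drop b g)) = Gf s + 1 := by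
  have := Gf_add_Cf (hwf.gSucc (a := .drop b g) h)
  have := Gf_add_Cf hwf
  have := Cf_drop h
  omega

theorem Gf_pick (hwf : WF s) (ha : gApp s (.pick b g)) : Gf (gSucc s (.pick b g)) + 1 = Gf s := by
  have := Gf_add_Cf (hwf.gSucc ha)
  have := Gf_add_Cf hwf
  have := Cf_pick (g := g) ha.1
  omega

end Gripper

/-- Soundness of the learned Gripper abstract actions. In any consistent
state: (i) if C>0 and X, dropping a carried ball is applicable, decreases C by 1,
increases G by 1, and leaves B unchanged; (ii) if ¬X, B>0 and G>0, picking a ball in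
the non-target room is applicable, decreases B and G by 1 and increases C by 1;
(iii) if ¬X and C>0, moving to the target room is applicable and makes X true leaving
B, C, G unchanged; (iv) if X, C=0 and G>0, leaving the target room is applicable and
makes X false leaving B, C, G unchanged. -/
theorem stmt17 {Ball Grip : Type} [Fintype Ball] [Fintype Grip]
    [DecidableEq Ball] [DecidableEq Grip]
    (s : GState Ball Grip) (hwf : WF s) :
    (0 < Cf s → Xf s → ∃ b g, gApp s (GAct.drop b g) ∧
      Cf (gSucc s (GAct.drop b g)) + 1 = Cf s ∧
      Gf (gSucc s (GAct.drop b g)) = Gf s + 1 ∧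
      Bf (gSucc s (GAct.drop b g)) = Bf s) ∧
    (¬ Xf s → 0 < Bf s → 0 < Gf s → ∃ b g, gApp s (GAct.pick b g) ∧
      Bf (gSucc s (GAct.pick b g)) + 1 = Bf s ∧
      Gf (gSucc s (GAct.pick b g)) + 1 = Gf s ∧
      Cf (gSucc s (GAct.pick b g)) = Cf s + 1) ∧
    (¬ Xf s → 0 < Cf s → gApp s (GAct.move true) ∧
      Xf (gSucc s (GAct.move true)) ∧
      Bf (gSucc s (GAct.move true)) = Bf s ∧
      Cf (gSucc s (GAct.move true)) = Cf s ∧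
      Gf (gSucc s (GAct.move true)) = Gf s) ∧
    (Xf s → Cf s = 0 → 0 < Gf s → gApp s (GAct.move false) ∧
      ¬ Xf (gSucc s (GAct.move false)) ∧
      Bf (gSucc s (GAct.move false)) = Bf s ∧
      Cf (gSucc s (GAct.move false)) = Cf s ∧
      Gf (gSucc s (GAct.move false)) = Gf s) := by
  refine ⟨fun hC hx => ?_, fun hx hB hG => ?_, fun hx _ => ?_, fun hx _ _ => ?_⟩
  · obtain ⟨b, hb⟩ := card_pos.1 hC
    obtain ⟨g, hg⟩ := (mem_filter.1 hb).2
    exact ⟨b, g, hg, Cf_drop hg, Gf_drop hwf hg, Bf_drop hx hg⟩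
  · obtain ⟨b, hbB⟩ := card_pos.1 hB
    obtain ⟨g, hg⟩ := card_pos.1 hG
    have hb : s.loc b = .inl false := (mem_filter.1 hbB).2
    have ha : gApp s (.pick b g) := ⟨by simp_all [Xf], (mem_filter.1 hg).2⟩
    exact ⟨b, g, ha, Bf_pick hb, Gf_pick hwf ha, Cf_pick hb⟩
  · exact ⟨by simp_all [Xf, gApp], rfl, rfl, rfl, rfl⟩
  · exact ⟨by simp_all [Xf, gApp], Bool.false_ne_true, rfl, rfl, rfl⟩
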